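/- arXiv:2111.14078 — 4 statements merged into one kernel-verified Lean document; each statement's English description precedes it below -/
import Mathlib

section
/- Let p > 1. There exists a constant C > 0 (one may take C = p/(p−1)) such that for every positive continuously differentiable function f on the interval (0,1) with lim_{x→0+} f(x) = 0, one has ‖x ↦ f(x)/x‖_{L^p(0,1)} ≤ C ‖f'‖_{L^p(0,1)}. -/
/-!
By the fundamental theorem of calculus `|f x| ≤ ∫_0^x |f'|`, so it suffices to prove Hardy's
integral inequality `∫_0^a (x⁻¹ ∫_0^x g)^p ≤ q^p ∫_0^a g^p` for `g ≥ 0`, where `q = p/(p-1)`.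
Hölder's inequality with the weight `t^(1/p)` gives
`(∫_0^x g)^p ≤ q^(p-1) x^((p-1)/q) ∫_0^x g^p t^(1/q)`. Dividing by `x^p`, integrating in `x` and
swapping the order of integration, the inner integral `∫_t^a x^(-1/q-1) dx ≤ q t^(-1/q)` exactly
cancels the weight `t^(1/q)`.
-/

open MeasureTheory Real Set
open scoped ENNReal
open ENNReal (ofReal)

theorem lintegral_rpow_le_lintegral_rpow_mul_rpow_mul_lintegral_inv_rpow {α : Type*}
    [MeasurableSpace α] {μ : Measure α} {p : ℝ} (hp : 1 < p) {f w : α → ℝ≥0∞}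
    (hf : AEMeasurable f μ) (hw : AEMeasurable w μ) (hw_ne_zero : ∀ᵐ a ∂μ, w a ≠ 0)
    (hw_ne_top : ∀ᵐ a ∂μ, w a ≠ ∞) :
    (∫⁻ a, f a ∂μ) ^ p ≤ (∫⁻ a, f a ^ p * w a ^ (p - 1) ∂μ) * (∫⁻ a, (w a)⁻¹ ∂μ) ^ (p - 1) := by
  have hp₀ : 0 < p := one_pos.trans hp
  have hexp : (p - 1) * p⁻¹ = 1 - p⁻¹ := by field_simp
  have hexp_nonneg : 0 ≤ 1 - p⁻¹ := by linarith [inv_lt_one_of_one_lt₀ hp]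
  have hsplit : ∀ᵐ a ∂μ, f a = (f a ^ p * w a ^ (p - 1)) ^ p⁻¹ * (w a)⁻¹ ^ (1 - p⁻¹) := by
    filter_upwards [hw_ne_zero, hw_ne_top] with a h₀ h_top
    rw [ENNReal.mul_rpow_of_nonneg _ _ (inv_nonneg.2 hp₀.le), ← ENNReal.rpow_mul,
      ← ENNReal.rpow_mul, hexp, mul_inv_cancel₀ hp₀.ne', ENNReal.rpow_one, ENNReal.inv_rpow,
      mul_assoc, ENNReal.mul_inv_cancel (ENNReal.rpow_pos (pos_iff_ne_zero.2 h₀) h_top).ne'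
        (ENNReal.rpow_ne_top_of_nonneg hexp_nonneg h_top), mul_one]
  have holder := ENNReal.lintegral_mul_norm_pow_le (f := fun a ↦ f a ^ p * w a ^ (p - 1))
    (g := fun a ↦ (w a)⁻¹) ((hf.pow_const p).mul (hw.pow_const (p - 1))) hw.inv
    (inv_nonneg.2 hp₀.le) hexp_nonneg (add_sub_cancel _ _)
  rw [← lintegral_congr_ae hsplit] at holder
  calc (∫⁻ a, f a ∂μ) ^ p
      ≤ ((∫⁻ a, f a ^ p * w a ^ (p - 1) ∂μ) ^ p⁻¹ * (∫⁻ a, (w a)⁻¹ ∂μ) ^ (1 - p⁻¹)) ^ p :=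
        ENNReal.rpow_le_rpow holder hp₀.le
    _ = _ := by
      rw [ENNReal.mul_rpow_of_nonneg _ _ hp₀.le, ← ENNReal.rpow_mul, ← ENNReal.rpow_mul,
        inv_mul_cancel₀ hp₀.ne', ENNReal.rpow_one, ← hexp, mul_assoc, inv_mul_cancel₀ hp₀.ne',
        mul_one]

theorem lintegral_Ioo_zero_rpow_sub_one {r x : ℝ} (hr : 0 < r) (hx : 0 ≤ x) :
    ∫⁻ t in Ioo 0 x, ofReal t ^ (r - 1) = ofReal r⁻¹ * ofReal x ^ r := by
  have hint : IntegrableOn (fun t : ℝ ↦ t ^ (r - 1)) (Ioo 0 x) :=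
    ((intervalIntegrable_iff_integrableOn_Ioc_of_le hx).1
      (intervalIntegral.intervalIntegrable_rpow' (by linarith))).mono_set Ioo_subset_Ioc_self
  rw [setLIntegral_congr_fun measurableSet_Ioo fun t ht ↦ ENNReal.ofReal_rpow_of_pos ht.1,
    ← ofReal_integral_eq_lintegral_ofReal hint
      ((ae_restrict_iff' measurableSet_Ioo).2 (.of_forall fun t ht ↦ (rpow_pos_of_pos ht.1 _).le)),
    integral_Ioc_eq_integral_Ioo.symm, ← intervalIntegral.integral_of_le hx,
    integral_rpow (.inl (by linarith)), sub_add_cancel, zero_rpow hr.ne', sub_zero,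
    ENNReal.ofReal_rpow_of_nonneg hx hr.le, ← ENNReal.ofReal_mul (inv_nonneg.2 hr.le),
    inv_mul_eq_div]

theorem lintegral_Ioi_rpow_neg_sub_one {r t : ℝ} (hr : 0 < r) (ht : 0 < t) :
    ∫⁻ x in Ioi t, ofReal x ^ (-r - 1) = ofReal r⁻¹ * ofReal t ^ (-r) := by
  have hexp : -r - 1 < -1 := by linarith
  rw [setLIntegral_congr_fun measurableSet_Ioi fun x hx ↦ ENNReal.ofReal_rpow_of_pos (ht.trans hx),
    ← ofReal_integral_eq_lintegral_ofReal (integrableOn_Ioi_rpow_of_lt hexp ht)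
      ((ae_restrict_iff' measurableSet_Ioi).2
        (.of_forall fun x hx ↦ (rpow_pos_of_pos (ht.trans hx) _).le)),
    integral_Ioi_rpow_of_lt hexp ht, sub_add_cancel, ENNReal.ofReal_rpow_of_pos ht,
    ← ENNReal.ofReal_mul (inv_nonneg.2 hr.le), neg_div_neg_eq, inv_mul_eq_div]

theorem lintegral_Ioo_mul_lintegral_Ioo_swap {a b : ℝ} {h k : ℝ → ℝ≥0∞} (hh : Measurable h)
    (hk : Measurable k) :
    ∫⁻ x in Ioo a b, k x * ∫⁻ t in Ioo a x, h t = ∫⁻ t in Ioo a b, h t * ∫⁻ x in Ioo t b, k x := by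
  let F : ℝ → ℝ → ℝ≥0∞ := fun x t ↦ if t < x then h t * k x else 0
  have hF : Measurable (Function.uncurry F) :=
    Measurable.ite (measurableSet_lt measurable_snd measurable_fst)
      ((hh.comp measurable_snd).mul (hk.comp measurable_fst)) measurable_const
  have h_inner_t : ∀ x ∈ Ioo a b, k x * ∫⁻ t in Ioo a x, h t = ∫⁻ t in Ioo a b, F x t := by
    intro x hx
    have : (fun t ↦ F x t) = (Iio x).indicator fun t ↦ h t * k x := by
      ext t; simp only [F, indicator_apply, mem_Iio]
    rw [this, lintegral_indicator measurableSet_Iio, Measure.restrict_restrict measurableSet_Iio,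
      Iio_inter_Ioo, min_eq_left hx.2.le, lintegral_mul_const _ hh, mul_comm]
  have h_inner_x : ∀ t ∈ Ioo a b, h t * ∫⁻ x in Ioo t b, k x = ∫⁻ x in Ioo a b, F x t := by
    intro t ht
    have : (fun x ↦ F x t) = (Ioi t).indicator fun x ↦ h t * k x := by
      ext x; simp only [F, indicator_apply, mem_Ioi]
    rw [this, lintegral_indicator measurableSet_Ioi, Measure.restrict_restrict measurableSet_Ioi,
      Ioi_inter_Ioo, max_eq_left ht.1.le, lintegral_const_mul _ hk]
  rw [setLIntegral_congr_fun measurableSet_Ioo h_inner_t,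
    setLIntegral_congr_fun measurableSet_Ioo h_inner_x]
  exact lintegral_lintegral_swap hF.aemeasurable

theorem rpow_lintegral_Ioo_div_le {p q : ℝ} (hpq : p.HolderConjugate q) {g : ℝ → ℝ≥0∞}
    (hg : Measurable g) {x : ℝ} (hx : 0 < x) :
    ((∫⁻ t in Ioo 0 x, g t) / ofReal x) ^ p ≤
      ofReal q ^ (p - 1) *
        (ofReal x ^ (-q⁻¹ - 1) * ∫⁻ t in Ioo 0 x, g t ^ p * ofReal t ^ q⁻¹) := by
  have hp₀ := hpq.pos
  have hq₀ := hpq.symm.pos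
  have hx₀ : ofReal x ≠ 0 := ENNReal.ofReal_ne_zero_iff.2 hx
  have h_weight : ∀ t ∈ Ioo (0 : ℝ) x, g t ^ p * (ofReal t ^ p⁻¹) ^ (p - 1) =
      g t ^ p * ofReal t ^ q⁻¹ := by
    intro t _
    rw [← ENNReal.rpow_mul, ← hpq.one_sub_inv]
    congr 2
    field_simp
  have h_inv_weight : ∀ t ∈ Ioo (0 : ℝ) x, (ofReal t ^ p⁻¹)⁻¹ =
      ofReal t ^ (q⁻¹ - 1) := by
    intro t _
    rw [← ENNReal.rpow_neg, ← hpq.one_sub_inv]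
    ring_nf
  have holder := lintegral_rpow_le_lintegral_rpow_mul_rpow_mul_lintegral_inv_rpow hpq.lt
    (μ := volume.restrict (Ioo 0 x)) hg.aemeasurable
    (w := fun t ↦ ofReal t ^ p⁻¹) (by fun_prop)
    ((ae_restrict_iff' measurableSet_Ioo).2 (.of_forall fun t ht ↦
      (ENNReal.rpow_pos (ENNReal.ofReal_pos.2 ht.1) ENNReal.ofReal_ne_top).ne'))
    (.of_forall fun t ↦ ENNReal.rpow_ne_top_of_nonneg (inv_nonneg.2 hp₀.le) ENNReal.ofReal_ne_top)
  rw [setLIntegral_congr_fun measurableSet_Ioo h_weight,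
    setLIntegral_congr_fun measurableSet_Ioo h_inv_weight,
    lintegral_Ioo_zero_rpow_sub_one (inv_pos.2 hq₀) hx.le, inv_inv] at holder
  calc ((∫⁻ t in Ioo 0 x, g t) / ofReal x) ^ p
      = (∫⁻ t in Ioo 0 x, g t) ^ p * ofReal x ^ (-p) := by
        rw [ENNReal.div_rpow_of_nonneg _ _ hp₀.le, div_eq_mul_inv, ENNReal.rpow_neg]
    _ ≤ (∫⁻ t in Ioo 0 x, g t ^ p * ofReal t ^ q⁻¹) *
          (ofReal q * ofReal x ^ q⁻¹) ^ (p - 1) * ofReal x ^ (-p) := by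
        gcongr
    _ = ofReal q ^ (p - 1) * (ofReal x ^ (q⁻¹ * (p - 1)) * ofReal x ^ (-p)) *
          ∫⁻ t in Ioo 0 x, g t ^ p * ofReal t ^ q⁻¹ := by
        rw [ENNReal.mul_rpow_of_nonneg _ _ hpq.sub_one_pos.le, ← ENNReal.rpow_mul]
        ring
    _ = _ := by
      have hexp : q⁻¹ * (p - 1) + -p = -q⁻¹ - 1 := by
        rw [← hpq.one_sub_inv]
        field_simp
        ring
      rw [← ENNReal.rpow_add _ _ hx₀ ENNReal.ofReal_ne_top, hexp]
      ring

theorem lintegral_rpow_lintegral_Ioo_div_le {p q : ℝ} (hpq : p.HolderConjugate q)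
    {g : ℝ → ℝ≥0∞} (hg : Measurable g) (a : ℝ) :
    ∫⁻ x in Ioo 0 a, ((∫⁻ t in Ioo 0 x, g t) / ofReal x) ^ p ≤
      ofReal q ^ p * ∫⁻ t in Ioo 0 a, g t ^ p := by
  have hq₀ := hpq.symm.pos
  have h_tail : ∀ t ∈ Ioo (0 : ℝ) a, g t ^ p * ofReal t ^ q⁻¹ *
      ∫⁻ x in Ioo t a, ofReal x ^ (-q⁻¹ - 1) ≤ ofReal q * g t ^ p := by
    intro t ht
    have ht₀ : ofReal t ≠ 0 := ENNReal.ofReal_ne_zero_iff.2 ht.1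
    calc g t ^ p * ofReal t ^ q⁻¹ * ∫⁻ x in Ioo t a, ofReal x ^ (-q⁻¹ - 1)
        ≤ g t ^ p * ofReal t ^ q⁻¹ * ∫⁻ x in Ioi t, ofReal x ^ (-q⁻¹ - 1) := by
          gcongr
          exact Ioo_subset_Ioi_self
      _ = ofReal q * g t ^ p * (ofReal t ^ q⁻¹ * ofReal t ^ (-q⁻¹)) := by
          rw [lintegral_Ioi_rpow_neg_sub_one (inv_pos.2 hq₀) ht.1, inv_inv]
          ring
      _ = ofReal q * g t ^ p := by
          rw [← ENNReal.rpow_add _ _ ht₀ ENNReal.ofReal_ne_top, add_neg_cancel,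
            ENNReal.rpow_zero, mul_one]
  calc ∫⁻ x in Ioo 0 a, ((∫⁻ t in Ioo 0 x, g t) / ofReal x) ^ p
      ≤ ∫⁻ x in Ioo 0 a, ofReal q ^ (p - 1) *
          (ofReal x ^ (-q⁻¹ - 1) * ∫⁻ t in Ioo 0 x, g t ^ p * ofReal t ^ q⁻¹) :=
        setLIntegral_mono' measurableSet_Ioo fun x hx ↦ rpow_lintegral_Ioo_div_le hpq hg hx.1
    _ = ofReal q ^ (p - 1) * ∫⁻ t in Ioo 0 a, g t ^ p * ofReal t ^ q⁻¹ *
          ∫⁻ x in Ioo t a, ofReal x ^ (-q⁻¹ - 1) := by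
        rw [lintegral_const_mul' _ _
          (ENNReal.rpow_ne_top_of_nonneg hpq.sub_one_pos.le ENNReal.ofReal_ne_top),
          lintegral_Ioo_mul_lintegral_Ioo_swap (by fun_prop) (by fun_prop)]
    _ ≤ ofReal q ^ (p - 1) * ∫⁻ t in Ioo 0 a, ofReal q * g t ^ p := by
        gcongr _ * ?_
        exact setLIntegral_mono' measurableSet_Ioo h_tail
    _ = ofReal q ^ p * ∫⁻ t in Ioo 0 a, g t ^ p := by
        have hq_pow : ofReal q ^ (p - 1) * ofReal q = ofReal q ^ p := by
          have hq₀' : ofReal q ≠ 0 := ENNReal.ofReal_ne_zero_iff.2 hq₀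
          rw [ENNReal.rpow_sub _ _ hq₀' ENNReal.ofReal_ne_top, ENNReal.rpow_one,
            ENNReal.div_mul_cancel hq₀' ENNReal.ofReal_ne_top]
        rw [lintegral_const_mul _ (by fun_prop), ← mul_assoc, hq_pow]

theorem eLpNorm_lintegral_Ioo_div_le {p q : ℝ} (hpq : p.HolderConjugate q) {g : ℝ → ℝ≥0∞}
    (hg : Measurable g) (a : ℝ) :
    eLpNorm (fun x ↦ (∫⁻ t in Ioo 0 x, g t) / ofReal x) (ofReal p)
        (volume.restrict (Ioo 0 a)) ≤
      ofReal q * eLpNorm g (ofReal p) (volume.restrict (Ioo 0 a)) := by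
  have hp₀ := hpq.pos
  have hp_ne_zero : ofReal p ≠ 0 := ENNReal.ofReal_ne_zero_iff.2 hp₀
  simp only [eLpNorm_eq_lintegral_rpow_enorm_toReal hp_ne_zero ENNReal.ofReal_ne_top,
    enorm_eq_self, ENNReal.toReal_ofReal hp₀.le]
  calc (∫⁻ x in Ioo 0 a, ((∫⁻ t in Ioo 0 x, g t) / ofReal x) ^ p) ^ (1 / p)
      ≤ (ofReal q ^ p * ∫⁻ t in Ioo 0 a, g t ^ p) ^ (1 / p) := by
        gcongr
        exact lintegral_rpow_lintegral_Ioo_div_le hpq hg a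
    _ = _ := by
        rw [ENNReal.mul_rpow_of_nonneg _ _ (by positivity), ← ENNReal.rpow_mul,
          mul_one_div_cancel hp₀.ne', ENNReal.rpow_one]

theorem enorm_le_lintegral_Ioo_enorm_deriv {E : Type*} [NormedAddCommGroup E] [NormedSpace ℝ E]
    {f : ℝ → E} {a b x : ℝ} (hf : ContDiffOn ℝ 1 f (Ioo a b))
    (hlim : Filter.Tendsto f (nhdsWithin a (Ioi a)) (nhds 0)) (hx : x ∈ Ioo a b) :
    ‖f x‖ₑ ≤ ∫⁻ t in Ioo a x, ‖deriv f t‖ₑ := by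
  have h_sub : ∀ ε ∈ Ioo a x, ‖f x - f ε‖ₑ ≤ ∫⁻ t in Ioo a x, ‖deriv f t‖ₑ := by
    intro ε hε
    calc ‖f x - f ε‖ₑ ≤ ∫⁻ t in Icc ε x, ‖deriv f t‖ₑ :=
          enorm_sub_le_lintegral_deriv_of_contDiffOn_Icc
            (hf.mono (Icc_subset_Ioo hε.1 hx.2)) hε.2.le
      _ = ∫⁻ t in Ioo ε x, ‖deriv f t‖ₑ := by rw [restrict_Ioo_eq_restrict_Icc]
      _ ≤ ∫⁻ t in Ioo a x, ‖deriv f t‖ₑ := lintegral_mono_set (Ioo_subset_Ioo_left hε.1.le)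
  have h_tendsto : Filter.Tendsto (fun ε ↦ ‖f x - f ε‖ₑ) (nhdsWithin a (Ioi a)) (nhds ‖f x‖ₑ) := by
    simpa using (hlim.const_sub (f x)).enorm
  refine le_of_tendsto h_tendsto ?_
  filter_upwards [Ioo_mem_nhdsGT hx.1] with ε hε using h_sub ε hε

/-- **Hardy's inequality.** Let `p > 1`. There exists a constant `C > 0` (one may take
`C = p/(p-1)`) such that for every positive continuously differentiable function `f`
on `(0,1)` with `f(x) → 0` as `x → 0⁺`, one has
`‖x ↦ f(x)/x‖_{L^p(0,1)} ≤ C ‖f'‖_{L^p(0,1)}`. -/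
theorem hardy_inequality (p : ℝ) (hp : 1 < p) :
    ∃ C : ℝ, 0 < C ∧ C = p / (p - 1) ∧
      ∀ f : ℝ → ℝ,
        (∀ x ∈ Ioo (0:ℝ) 1, 0 < f x) →
        ContDiffOn ℝ 1 f (Ioo (0:ℝ) 1) →
        Filter.Tendsto f (nhdsWithin 0 (Ioi (0:ℝ))) (nhds 0) →
        eLpNorm (fun x => f x / x) (ENNReal.ofReal p) (volume.restrict (Ioo (0:ℝ) 1))
          ≤ ENNReal.ofReal C *
            eLpNorm (fun x => deriv f x) (ENNReal.ofReal p) (volume.restrict (Ioo (0:ℝ) 1)) := by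
  have hpq : p.HolderConjugate (p / (p - 1)) := .conjExponent hp
  refine ⟨p / (p - 1), hpq.symm.pos, rfl, fun f _ hf hlim ↦ ?_⟩
  have h_pointwise : ∀ x ∈ Ioo (0 : ℝ) 1,
      ‖f x / x‖ₑ ≤ ‖(∫⁻ t in Ioo 0 x, ‖deriv f t‖ₑ) / ofReal x‖ₑ := by
    intro x hx
    rw [enorm_eq_self, div_eq_mul_inv, enorm_mul, enorm_inv hx.1.ne',
      Real.enorm_of_nonneg hx.1.le, ← div_eq_mul_inv]
    exact ENNReal.div_le_div_right (enorm_le_lintegral_Ioo_enorm_deriv hf hlim hx) _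
  calc eLpNorm (fun x ↦ f x / x) (ofReal p) (volume.restrict (Ioo 0 1))
      ≤ eLpNorm (fun x ↦ (∫⁻ t in Ioo 0 x, ‖deriv f t‖ₑ) / ofReal x) (ofReal p)
          (volume.restrict (Ioo 0 1)) :=
        eLpNorm_mono_enorm_ae ((ae_restrict_iff' measurableSet_Ioo).2 (.of_forall h_pointwise))
    _ ≤ ofReal (p / (p - 1)) *
          eLpNorm (fun t ↦ ‖deriv f t‖ₑ) (ofReal p) (volume.restrict (Ioo 0 1)) :=
        eLpNorm_lintegral_Ioo_div_le hpq (measurable_deriv f).enorm 1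
    _ = _ := by rw [eLpNorm_enorm]
end

section
/- Let x ∈ ℝ³ with |x_h| > 0 and let ω : ℝ³ → ℝ be measurable with ω(−y_h, y₃) = ω(y_h, y₃) and ω(y_h, −y₃) = −ω(y_h, y₃) for all y ∈ ℝ³. If the function y ↦ (x_h·y_h)(x·y)/(|y_h| |y|⁵) ω(y) is Lebesgue integrable on Q(x) = {y ∈ ℝ³ : |y_h| ≥ 4|x_h|}, then ∫_{Q(x)} (x_h·y_h)(x·y)/(|y_h| |y|⁵) ω(y) dy = 0. -/
open MeasureTheory Real Set

noncomputable section

/-- ℝ³ with the Euclidean norm. -/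
abbrev E3 := EuclideanSpace ℝ (Fin 3)

/-- The point (a, b, c) of ℝ³. -/
def mk3 (a b c : ℝ) : E3 := (EuclideanSpace.equiv (Fin 3) ℝ).symm ![a, b, c]

/-- Norm of the horizontal component. -/
def hnorm (x : E3) : ℝ := Real.sqrt ((x 0)^2 + (x 1)^2)

/-- The exterior region Q(x). -/
def Qset (x : E3) : Set E3 := {y : E3 | 4 * hnorm x ≤ hnorm y}

end

lemma hnorm_neg (y : E3) : hnorm (-y) = hnorm y := by
  simp [hnorm]

lemma mk3_neg_eq (y : E3) : mk3 (-(y 0)) (-(y 1)) (-(y 2)) = -y := by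
  ext i; fin_cases i <;> simp [mk3]

/-- Vanishing of the second symmetric integral I₁₂ (Statement 9). -/
theorem integral_I12_eq_zero (x : E3) (hx : 0 < hnorm x) (ω : E3 → ℝ)
    (hmeas : Measurable ω)
    (hsymh : ∀ y : E3, ω (mk3 (-(y 0)) (-(y 1)) (y 2)) = ω y)
    (hodd : ∀ y : E3, ω (mk3 (y 0) (y 1) (-(y 2))) = -ω y)
    (hint : IntegrableOn
      (fun y : E3 =>
        (x 0 * y 0 + x 1 * y 1) * (x 0 * y 0 + x 1 * y 1 + x 2 * y 2)
          / (hnorm y * ‖y‖^5) * ω y)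
      (Qset x) volume) :
    ∫ y in Qset x,
        (x 0 * y 0 + x 1 * y 1) * (x 0 * y 0 + x 1 * y 1 + x 2 * y 2)
          / (hnorm y * ‖y‖^5) * ω y = 0 := by
  set f : E3 → ℝ := fun y =>
    (x 0 * y 0 + x 1 * y 1) * (x 0 * y 0 + x 1 * y 1 + x 2 * y 2)
      / (hnorm y * ‖y‖^5) * ω y with hf
  have hωneg : ∀ y : E3, ω (-y) = -ω y := by
    intro y
    set z := mk3 (-(y 0)) (-(y 1)) (y 2) with hzdef
    have h1 : ω z = ω y := hsymh y
    have h2 := hodd z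
    have hz0 : z 0 = -(y 0) := rfl
    have hz1 : z 1 = -(y 1) := rfl
    have hz2 : z 2 = y 2 := rfl
    rw [hz0, hz1, hz2, mk3_neg_eq, h1] at h2
    exact h2
  have hfneg : ∀ y : E3, f (-y) = -f y := by
    intro y
    simp only [hf, hωneg, hnorm_neg, norm_neg]
    have h0 : (-y : E3) 0 = -(y 0) := rfl
    have h1 : (-y : E3) 1 = -(y 1) := rfl
    have h2 : (-y : E3) 2 = -(y 2) := rfl
    rw [h0, h1, h2]
    ring
  have hQmeas : MeasurableSet (Qset x) := by
    have hc : Continuous (fun y : E3 => hnorm y) := by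
      apply Real.continuous_sqrt.comp
      fun_prop
    exact measurableSet_le continuous_const.measurable hc.measurable
  have hQneg : ∀ y : E3, (-y ∈ Qset x) ↔ y ∈ Qset x := by
    intro y; simp [Qset, hnorm_neg]
  set g : E3 → ℝ := (Qset x).indicator f with hg
  have hgneg : ∀ y : E3, g (-y) = -g y := by
    intro y
    by_cases hy : y ∈ Qset x
    · rw [hg, indicator_of_mem ((hQneg y).mpr hy), indicator_of_mem hy, hfneg]
    · rw [hg, indicator_of_notMem (fun h => hy ((hQneg y).mp h)),
        indicator_of_notMem hy, neg_zero]
  have key : ∫ y, g y = 0 := by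
    have h1 : ∫ y, g (-y) = ∫ y, g y := integral_neg_eq_self g volume
    have h2 : ∫ y, g (-y) = -∫ y, g y := by
      simp_rw [hgneg]; exact integral_neg g
    linarith [h1, h2]
  rw [← integral_indicator hQmeas] at *
  exact key
end

section
/- Let x ∈ ℝ³ with |x_h| > 0 and let ω : ℝ³ → ℝ be measurable satisfying ω(−y₂, y₁, y₃) = ω(y₁, y₂, y₃) and ω(−y_h, y₃) = ω(y_h, y₃) for all y ∈ ℝ³. Assume the functions y ↦ y₃ (x_h·y_h)(x·y)/(|y_h| |y|⁵) ω(y) and y ↦ |y_h| y₃ |y|^{−5} ω(y) are Lebesgue integrable on Q(x) = {y ∈ ℝ³ : |y_h| ≥ 4|x_h|}. Then ∫_{Q(x)} y₃ (x_h·y_h)(x·y)/(|y_h| |y|⁵) ω(y) dy = (|x_h|²/2) ∫_{Q(x)} |y_h| y₃ |y|^{−5} ω(y) dy. -/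
open MeasureTheory Real Set

@[simp] lemma mk3_apply0 (a b c : ℝ) : mk3 a b c 0 = a := rfl
@[simp] lemma mk3_apply1 (a b c : ℝ) : mk3 a b c 1 = b := rfl
@[simp] lemma mk3_apply2 (a b c : ℝ) : mk3 a b c 2 = c := rfl

lemma mk3_eta (y : E3) : mk3 (y 0) (y 1) (y 2) = y := by
  ext i; fin_cases i <;> rfl

/-- Rotation by 90 degrees in the horizontal plane, as a linear isometry equiv. -/
noncomputable def Trot : E3 ≃ₗᵢ[ℝ] E3 :=
  { toFun := fun y => mk3 (-(y 1)) (y 0) (y 2)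
    invFun := fun y => mk3 (y 1) (-(y 0)) (y 2)
    map_add' := fun y z => by
      ext i; fin_cases i <;> simp [mk3] <;> ring
    map_smul' := fun c y => by
      ext i; fin_cases i <;> simp [mk3] <;> ring
    left_inv := fun y => by
      ext i; fin_cases i <;> simp [mk3]
    right_inv := fun y => by
      ext i; fin_cases i <;> simp [mk3]
    norm_map' := fun y => by
      simp only [LinearEquiv.coe_mk]
      rw [EuclideanSpace.norm_eq, EuclideanSpace.norm_eq]
      congr 1
      simp [Fin.sum_univ_three]
      ring }

lemma Trot_apply (y : E3) : Trot y = mk3 (-(y 1)) (y 0) (y 2) := rfl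

@[simp] lemma Trot_apply0 (y : E3) : Trot y 0 = -(y 1) := rfl
@[simp] lemma Trot_apply1 (y : E3) : Trot y 1 = y 0 := rfl
@[simp] lemma Trot_apply2 (y : E3) : Trot y 2 = y 2 := rfl

@[simp] lemma hnorm_Trot (y : E3) : hnorm (Trot y) = hnorm y := by
  simp only [hnorm, Trot_apply0, Trot_apply1]
  congr 1; ring

@[simp] lemma norm_Trot (y : E3) : ‖Trot y‖ = ‖y‖ := Trot.norm_map y

lemma Qset_preimage (x : E3) : Trot ⁻¹' (Qset x) = Qset x := by
  ext y
  simp only [Set.mem_preimage, Qset, Set.mem_setOf_eq, hnorm_Trot]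

attribute [irreducible] Trot

/-- Evaluation of the integral I₁₃ by symmetry (Statement 10). -/
theorem integral_I13_eq (x : E3) (hx : 0 < hnorm x) (ω : E3 → ℝ)
    (hmeas : Measurable ω)
    (hrot : ∀ y : E3, ω (mk3 (-(y 1)) (y 0) (y 2)) = ω y)
    (hsymh : ∀ y : E3, ω (mk3 (-(y 0)) (-(y 1)) (y 2)) = ω y)
    (hint1 : IntegrableOn
      (fun y : E3 =>
        y 2 * (x 0 * y 0 + x 1 * y 1) * (x 0 * y 0 + x 1 * y 1 + x 2 * y 2)
          / (hnorm y * ‖y‖^5) * ω y)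
      (Qset x) volume)
    (hint2 : IntegrableOn
      (fun y : E3 => hnorm y * y 2 / ‖y‖^5 * ω y) (Qset x) volume) :
    ∫ y in Qset x,
        y 2 * (x 0 * y 0 + x 1 * y 1) * (x 0 * y 0 + x 1 * y 1 + x 2 * y 2)
          / (hnorm y * ‖y‖^5) * ω y
      = (hnorm x)^2 / 2 * ∫ y in Qset x, hnorm y * y 2 / ‖y‖^5 * ω y := by
  set f : E3 → ℝ := fun y =>
    y 2 * (x 0 * y 0 + x 1 * y 1) * (x 0 * y 0 + x 1 * y 1 + x 2 * y 2)
      / (hnorm y * ‖y‖^5) * ω y with hf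
  set g : E3 → ℝ := fun y => hnorm y * y 2 / ‖y‖^5 * ω y with hg
  have mp : MeasurePreserving (Trot : E3 → E3) volume volume :=
    Trot.measurePreserving
  have emb : MeasurableEmbedding (Trot : E3 → E3) :=
    Trot.toHomeomorph.measurableEmbedding
  -- invariance of ω under the rotation
  have hω1 : ∀ y : E3, ω (Trot y) = ω y := by
    intro y
    rw [Trot_apply]
    exact hrot y
  -- key pointwise identity on Qset x
  have key : ∀ y : E3, y ∈ Qset x →
      f y + f (Trot y) + f (Trot (Trot y)) + f (Trot (Trot (Trot y)))
        = 2 * (hnorm x)^2 * g y := by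
    intro y hy
    have hny : 0 < hnorm y := lt_of_lt_of_le (by linarith) hy
    have hsq : (hnorm y)^2 = (y 0)^2 + (y 1)^2 := by
      rw [hnorm, sq_sqrt]; positivity
    have hxsq : (hnorm x)^2 = (x 0)^2 + (x 1)^2 := by
      rw [hnorm, sq_sqrt]; positivity
    have hy0 : y ≠ 0 := by
      intro h
      rw [h] at hny
      simp [hnorm] at hny
    have hN : 0 < ‖y‖ := norm_pos_iff.mpr hy0
    have hh : hnorm y ≠ 0 := ne_of_gt hny
    have hnn : (‖y‖ : ℝ) ≠ 0 := ne_of_gt hN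
    have hωT1 : ω (Trot y) = ω y := hω1 y
    have hωT2 : ω (Trot (Trot y)) = ω y := by rw [hω1, hω1]
    have hωT3 : ω (Trot (Trot (Trot y))) = ω y := by rw [hω1, hω1, hω1]
    simp only [hf, hg, Trot_apply0, Trot_apply1, Trot_apply2, hnorm_Trot,
      norm_Trot, neg_neg, hωT1, hωT2, hωT3]
    have hgrw : hnorm y * y 2 / ‖y‖^5 * ω y
        = ((y 0)^2 + (y 1)^2) * y 2 / (hnorm y * ‖y‖^5) * ω y := by
      rw [← hsq]
      field_simp
    rw [hxsq, hgrw]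
    field_simp
    ring
  -- measurability of Qset
  have hQmeas : MeasurableSet (Qset x) := by
    have hc : ∀ i : Fin 3, Continuous (fun y : E3 => y i) := fun i =>
      (PiLp.proj (𝕜 := ℝ) (p := 2) (β := fun _ : Fin 3 => ℝ) i).continuous
    have : Continuous (hnorm : E3 → ℝ) := by
      have : (hnorm : E3 → ℝ) = fun y => Real.sqrt ((y 0)^2 + (y 1)^2) := by
        funext y; rw [hnorm]
      rw [this]
      exact Real.continuous_sqrt.comp (((hc 0).pow 2).add ((hc 1).pow 2))
    exact (isClosed_le continuous_const this).measurableSet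
  -- invariance of set integrals under the rotation
  have hinv : ∀ (F : E3 → ℝ), IntegrableOn F (Qset x) volume →
      (∫ y in Qset x, F (Trot y)) = ∫ y in Qset x, F y := by
    intro F hF
    have := mp.setIntegral_preimage_emb emb F (Qset x)
    rwa [Qset_preimage] at this
  have hintcomp : ∀ (F : E3 → ℝ), IntegrableOn F (Qset x) volume →
      IntegrableOn (fun y => F (Trot y)) (Qset x) volume := by
    intro F hF
    have := (mp.integrableOn_comp_preimage emb (f := F) (s := Qset x)).mpr hF
    rwa [Qset_preimage] at this
  have hi1 : IntegrableOn (fun y => f (Trot y)) (Qset x) volume := hintcomp f hint1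
  have hi2 : IntegrableOn (fun y => f (Trot (Trot y))) (Qset x) volume := by
    have h := hintcomp (fun y => f (Trot y)) hi1
    exact h
  have hi3 : IntegrableOn (fun y => f (Trot (Trot (Trot y)))) (Qset x) volume := by
    have h := hintcomp (fun y => f (Trot (Trot y))) hi2
    exact h
  have e1 : (∫ y in Qset x, f (Trot y)) = ∫ y in Qset x, f y := hinv f hint1
  have e2 : (∫ y in Qset x, f (Trot (Trot y))) = ∫ y in Qset x, f y := by
    have h := hinv (fun y => f (Trot y)) hi1
    rw [h, e1]
  have e3 : (∫ y in Qset x, f (Trot (Trot (Trot y)))) = ∫ y in Qset x, f y := by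
    have h := hinv (fun y => f (Trot (Trot y))) hi2
    rw [h, e2]
  have sum_eq : (∫ y in Qset x,
      (f y + f (Trot y) + f (Trot (Trot y)) + f (Trot (Trot (Trot y)))))
      = ∫ y in Qset x, 2 * (hnorm x)^2 * g y := by
    apply setIntegral_congr_fun hQmeas
    intro y hy
    exact key y hy
  have A1 : IntegrableOn (fun y => f y + f (Trot y)) (Qset x) volume :=
    hint1.add hi1
  have A2 : IntegrableOn
      (fun y => f y + f (Trot y) + f (Trot (Trot y))) (Qset x) volume :=
    A1.add hi2
  rw [integral_add A2 hi3, integral_add A1 hi2, integral_add hint1 hi1,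
      e1, e2, e3, integral_const_mul] at sum_eq
  linear_combination sum_eq / 4
end

section
/- There exists an absolute constant C > 0 such that for all x, y ∈ ℝ³ with |x_h| ≥ x₃ > 0, y₃ ≥ 0 and |y_h| ≥ 4|x_h|, one has | 2|y|⁵ − |x−y| |x−ȳ|³ (|x−y| + |x−ȳ|) | ≤ C |x| |y|⁴, where ȳ = (y_h, −y₃). -/
open MeasureTheory Real Set

noncomputable section

/-- Reflection in the last coordinate. -/
def flip3 (y : E3) : E3 := mk3 (y 0) (y 1) (-(y 2))

end

lemma key_alg (r s a b : ℝ) (hs : 0 ≤ s) (hsr : 2*s ≤ r)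
    (ha1 : r - s ≤ a) (ha2 : a ≤ r + s) (hb1 : r - s ≤ b) (hb2 : b ≤ r + s) :
    |2*r^5 - a*b^3*(a+b)| ≤ 160 * s * r^4 := by
  have hr : 0 ≤ r := by linarith
  have hrs : 0 ≤ r - s := by linarith
  have h2s : 0 ≤ r - 2*s := by linarith
  have ha0 : 0 ≤ a := le_trans hrs ha1
  have hb0 : 0 ≤ b := le_trans hrs hb1
  have hrs' : 0 ≤ r + s := by linarith
  have h1 : a*b^3 ≤ (r+s)*(r+s)^3 :=
    mul_le_mul ha2 (pow_le_pow_left₀ hb0 hb2 3) (by positivity) hrs'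
  have h1' : (r-s)*(r-s)^3 ≤ a*b^3 :=
    mul_le_mul ha1 (pow_le_pow_left₀ hrs hb1 3) (by positivity) ha0
  have h2 : a*b^3*(a+b) ≤ ((r+s)*(r+s)^3)*((r+s)+(r+s)) :=
    mul_le_mul h1 (by linarith) (by linarith)
      (by nlinarith [pow_nonneg hrs' 3])
  have h2' : ((r-s)*(r-s)^3)*((r-s)+(r-s)) ≤ a*b^3*(a+b) :=
    mul_le_mul h1' (by linarith) (by linarith) (by positivity)
  have hUB : ((r+s)*(r+s)^3)*((r+s)+(r+s)) ≤ 2*r^5 + 160*s*r^4 := by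
    nlinarith [mul_nonneg (mul_nonneg h2s hs) (pow_nonneg hr 3),
      mul_nonneg (mul_nonneg h2s (mul_nonneg hs hs)) (sq_nonneg r),
      mul_nonneg (mul_nonneg h2s (mul_nonneg hs (mul_nonneg hs hs))) hr,
      mul_nonneg h2s (mul_nonneg hs (mul_nonneg hs (mul_nonneg hs hs)))]
  have hLB : 2*r^5 - 160*s*r^4 ≤ ((r-s)*(r-s)^3)*((r-s)+(r-s)) := by
    nlinarith [mul_nonneg (mul_nonneg h2s hs) (pow_nonneg hr 3),
      mul_nonneg (mul_nonneg h2s (mul_nonneg hs hs)) (sq_nonneg r),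
      mul_nonneg (mul_nonneg h2s (mul_nonneg hs (mul_nonneg hs hs))) hr,
      mul_nonneg h2s (mul_nonneg hs (mul_nonneg hs (mul_nonneg hs hs))),
      mul_nonneg (mul_nonneg hs hs) (pow_nonneg hr 3),
      mul_nonneg (mul_nonneg hs (mul_nonneg hs hs)) (sq_nonneg r)]
  rw [abs_le]
  constructor <;> linarith

lemma norm_sq_E3 (x : E3) : ‖x‖^2 = (x 0)^2 + (x 1)^2 + (x 2)^2 := by
  rw [EuclideanSpace.norm_eq, Real.sq_sqrt (by positivity)]
  simp [Fin.sum_univ_three, Real.norm_eq_abs, sq_abs]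

lemma flip3_apply (y : E3) : flip3 y 0 = y 0 ∧ flip3 y 1 = y 1 ∧ flip3 y 2 = -(y 2) := by
  refine ⟨rfl, rfl, rfl⟩

lemma norm_flip3 (y : E3) : ‖flip3 y‖ = ‖y‖ := by
  have h1 := norm_sq_E3 (flip3 y)
  have h2 := norm_sq_E3 y
  obtain ⟨e0, e1, e2⟩ := flip3_apply y
  rw [e0, e1, e2] at h1
  have : ‖flip3 y‖^2 = ‖y‖^2 := by rw [h1, h2]; ring
  nlinarith [norm_nonneg (flip3 y), norm_nonneg y]

/-- Algebraic estimate on the region Q(x) (Statement 12). -/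
theorem algebraic_estimate_Q :
    ∃ C : ℝ, 0 < C ∧
      ∀ x y : E3, x 2 ≤ hnorm x → 0 < x 2 → 0 ≤ y 2 → 4 * hnorm x ≤ hnorm y →
        |2 * ‖y‖^5 - ‖x - y‖ * ‖x - flip3 y‖^3 * (‖x - y‖ + ‖x - flip3 y‖)|
          ≤ C * ‖x‖ * ‖y‖^4 := by
  refine ⟨160, by norm_num, fun x y hx3 hx3' hy3 hxy => ?_⟩
  set r := ‖y‖
  set s := ‖x‖
  set a := ‖x - y‖
  set b := ‖x - flip3 y‖
  -- hnorm facts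
  have hhx : 0 ≤ hnorm x := Real.sqrt_nonneg _
  have hhy : 0 ≤ hnorm y := Real.sqrt_nonneg _
  have hx_sq : (hnorm x)^2 = (x 0)^2 + (x 1)^2 := Real.sq_sqrt (by positivity)
  have hy_sq : (hnorm y)^2 = (y 0)^2 + (y 1)^2 := Real.sq_sqrt (by positivity)
  have hxn : ‖x‖^2 = (x 0)^2 + (x 1)^2 + (x 2)^2 := norm_sq_E3 x
  have hyn : ‖y‖^2 = (y 0)^2 + (y 1)^2 + (y 2)^2 := norm_sq_E3 y
  -- ‖x‖^2 ≤ 2 * hnorm x ^2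
  have hx2sq : (x 2)^2 ≤ (hnorm x)^2 := by
    have := hx3'.le
    nlinarith
  have hxle : s^2 ≤ 2 * (hnorm x)^2 := by rw [hxn, hx_sq] at *; nlinarith
  -- hnorm y ≤ ‖y‖
  have hyle : (hnorm y)^2 ≤ r^2 := by rw [hyn, hy_sq]; nlinarith [sq_nonneg (y 2)]
  have hhy_le : hnorm y ≤ r := by nlinarith [norm_nonneg y]
  -- 2 s ≤ r
  have hsr : 2 * s ≤ r := by
    have h1 : (hnorm x)^2 ≤ (hnorm y / 4)^2 := by nlinarith
    have : 4 * s^2 ≤ r^2 := by nlinarith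
    nlinarith [norm_nonneg x, norm_nonneg y]
  -- triangle inequalities
  have hta : |a - r| ≤ s := by
    have h := abs_norm_sub_norm_le (x - y) (-y)
    have e : x - y - -y = x := by abel
    rw [e, norm_neg] at h
    exact h
  have htb : |b - r| ≤ s := by
    have h := abs_norm_sub_norm_le (x - flip3 y) (-flip3 y)
    have e : x - flip3 y - -flip3 y = x := by abel
    rw [e, norm_neg, norm_flip3] at h
    exact h
  rw [abs_le] at hta htb
  have := key_alg r s a b (norm_nonneg x) hsr
    (by linarith [hta.1]) (by linarith [hta.2]) (by linarith [htb.1]) (by linarith [htb.2])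
  calc |2 * r^5 - a * b^3 * (a + b)| ≤ 160 * s * r^4 := this
    _ = 160 * s * r^4 := rfl
end
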